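/- Let y1, y2 : (0,1) → ℝ be twice differentiable and set K = exp∘y1, phi = exp∘y2. Suppose that on (0,1) the equations (E2) y1'' + (1/2)(y1')^2 − x^{-1}(5+7x^2)(1−x^2)^{-1} y1' + 8(1−x^2)^{-2}(6 − 8 K^{-1/3} phi^{-1/3} + 2 K^{-1/3} phi^{-4/3}) = 0 and (E3) y2'' + (1/2) y1' y2' − 2 x^{-1}(1+2x^2)(1−x^2)^{-1} y2' + 32 (1−x^2)^{-2} K^{-1/3} phi^{-1/3}(phi^{-1} − 1) = 0 hold. Define Phi(x) = (y1'(x))^2 − (y2'(x))^2 − 12 x^{-1}(1+x^2)(1−x^2)^{-1} y1'(x) + 48(1−x^2)^{-2}(3 − 4 (K(x) phi(x))^{-1/3} + K(x)^{-1/3} phi(x)^{-4/3}). Then Phi is differentiable on (0,1) and satisfies the first-order linear equation Phi'(x) + ( y1'(x) − 4 x^{-1}(1+2x^2)(1−x^2)^{-1} ) Phi(x) = 0 for all x ∈ (0,1). -/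

import Mathlib

/-!
Writing `K^{-1/3} = exp (-y1/3)` and `phi^{-1/3} = exp (-y2/3)`, `Phi` becomes a polynomial in
`y1'`, `y2'`, `K^{-1/3}`, `phi^{-1/3}` with coefficients rational in `x`, and a direct computation
gives the identity
`Phi' + (y1' − 4x⁻¹(1+2x²)(1−x²)⁻¹) Phi = (2y1' − 12x⁻¹(1+x²)(1−x²)⁻¹) E2 − 2y2' E3`,
where `E2`, `E3` denote the left-hand sides of the two equations. Both vanish on `(0,1)`.
-/

open Real Set

/-- The constraint quantity `Phi` of the Berger Einstein ODE system, with
`K = exp ∘ y1`, `phi = exp ∘ y2`: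
`Phi = (y1')² − (y2')² − 12x⁻¹(1+x²)(1−x²)⁻¹ y1'
  + 48(1−x²)⁻²(3 − 4(K phi)^{-1/3} + K^{-1/3} phi^{-4/3})`. -/
noncomputable def BergerPhi (y1 y2 : ℝ → ℝ) (x : ℝ) : ℝ :=
  (deriv y1 x)^2 - (deriv y2 x)^2 - 12 * x⁻¹ * (1 + x^2) * (1 - x^2)⁻¹ * deriv y1 x
    + 48 * ((1 - x^2)⁻¹)^2 *
      (3 - 4 * (Real.exp (y1 x) * Real.exp (y2 x)) ^ (-(1:ℝ)/3)
         + Real.exp (y1 x) ^ (-(1:ℝ)/3) * Real.exp (y2 x) ^ (-(4:ℝ)/3))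

lemma exp_rpow_neg_one_third (w : ℝ) : exp w ^ (-(1:ℝ)/3) = exp (-w/3) := by
  rw [← exp_mul]; ring_nf

lemma exp_rpow_neg_four_thirds (w : ℝ) : exp w ^ (-(4:ℝ)/3) = exp (-w/3) ^ 4 := by
  rw [← exp_mul, ← exp_nat_mul]; ring_nf

lemma exp_inv_eq_exp_neg_div_three_pow_three (w : ℝ) : (exp w)⁻¹ = exp (-w/3) ^ 3 := by
  rw [← exp_neg, ← exp_nat_mul]; ring_nf

lemma bergerPhi_eq_exp_neg_div_three (y1 y2 : ℝ → ℝ) : BergerPhi y1 y2 = fun x ↦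
    (deriv y1 x)^2 - (deriv y2 x)^2 - 12 * (x⁻¹ * (1 + x^2) * (1 - x^2)⁻¹) * deriv y1 x
      + 48 * ((1 - x^2)⁻¹)^2 *
        (3 - 4 * (exp (-y1 x/3) * exp (-y2 x/3)) + exp (-y1 x/3) * exp (-y2 x/3) ^ 4) := by
  funext x
  rw [BergerPhi, ← exp_add, exp_rpow_neg_one_third, exp_rpow_neg_one_third,
    exp_rpow_neg_four_thirds, neg_add, add_div, exp_add]
  ring

lemma hasDerivAt_inv_mul_one_add_sq_mul_inv_one_sub_sq {x : ℝ} (hx : x ≠ 0)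
    (hx' : 1 - x^2 ≠ 0) :
    HasDerivAt (fun t ↦ t⁻¹ * (1 + t^2) * (1 - t^2)⁻¹)
      ((x^4 + 4*x^2 - 1) / (x^2 * (1 - x^2)^2)) x := by
  refine (((hasDerivAt_inv hx).fun_mul ((hasDerivAt_pow 2 x).const_add 1)).fun_mul
    (((hasDerivAt_pow 2 x).const_sub 1).fun_inv hx')).congr_deriv ?_
  field_simp
  ring

lemma hasDerivAt_inv_one_sub_sq_sq {x : ℝ} (hx' : 1 - x^2 ≠ 0) :
    HasDerivAt (fun t ↦ ((1 - t^2)⁻¹)^2) (4 * x / (1 - x^2)^3) x := by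
  refine ((((hasDerivAt_pow 2 x).const_sub 1).fun_inv hx').fun_pow 2).congr_deriv ?_
  norm_num
  field_simp
  ring

lemma hasDerivAt_exp_neg_div_three {y : ℝ → ℝ} {x : ℝ} (hy : DifferentiableAt ℝ y x) :
    HasDerivAt (fun t ↦ exp (-y t/3)) (-deriv y x / 3 * exp (-y x/3)) x := by
  simpa [mul_comm, neg_div] using (hy.hasDerivAt.neg.div_const 3).exp

/-- if (E2) and (E3) hold on `(0,1)`, the constraint quantity `Phi` is
differentiable on `(0,1)` and satisfies `Phi' + (y1' − 4x⁻¹(1+2x²)(1−x²)⁻¹) Phi = 0`. -/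
theorem berger_Phi_ode (y1 y2 : ℝ → ℝ)
    (hd1 : ∀ t ∈ Ioo (0:ℝ) 1, DifferentiableAt ℝ y1 t)
    (hd1' : ∀ t ∈ Ioo (0:ℝ) 1, DifferentiableAt ℝ (deriv y1) t)
    (hd2 : ∀ t ∈ Ioo (0:ℝ) 1, DifferentiableAt ℝ y2 t)
    (hd2' : ∀ t ∈ Ioo (0:ℝ) 1, DifferentiableAt ℝ (deriv y2) t)
    (hE2 : ∀ x ∈ Ioo (0:ℝ) 1, deriv (deriv y1) x + (1/2) * (deriv y1 x)^2
      - x⁻¹ * (5 + 7*x^2) * (1 - x^2)⁻¹ * deriv y1 x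
      + 8 * ((1 - x^2)⁻¹)^2 *
        (6 - 8 * Real.exp (y1 x) ^ (-(1:ℝ)/3) * Real.exp (y2 x) ^ (-(1:ℝ)/3)
           + 2 * Real.exp (y1 x) ^ (-(1:ℝ)/3) * Real.exp (y2 x) ^ (-(4:ℝ)/3)) = 0)
    (hE3 : ∀ x ∈ Ioo (0:ℝ) 1, deriv (deriv y2) x + (1/2) * deriv y1 x * deriv y2 x
      - 2 * x⁻¹ * (1 + 2*x^2) * (1 - x^2)⁻¹ * deriv y2 x
      + 32 * ((1 - x^2)⁻¹)^2 * Real.exp (y1 x) ^ (-(1:ℝ)/3)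
        * Real.exp (y2 x) ^ (-(1:ℝ)/3) * ((Real.exp (y2 x))⁻¹ - 1) = 0) :
    ∀ x ∈ Ioo (0:ℝ) 1,
      HasDerivAt (BergerPhi y1 y2)
        (-((deriv y1 x - 4 * x⁻¹ * (1 + 2*x^2) * (1 - x^2)⁻¹) * BergerPhi y1 y2 x)) x := by
  intro x hx
  have hx0 : x ≠ 0 := hx.1.ne'
  have hx1 : 1 - x^2 ≠ 0 := by nlinarith [hx.1, hx.2]
  have hu := hasDerivAt_exp_neg_div_three (hd1 x hx)
  have hv := hasDerivAt_exp_neg_div_three (hd2 x hx)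
  have hA := (hd1' x hx).hasDerivAt
  have hB := (hd2' x hx).hasDerivAt
  have hP := (((hu.fun_mul hv).const_mul 4).const_sub 3).fun_add (hu.fun_mul (hv.fun_pow 4))
  have hPhi := (((hA.fun_pow 2).fun_sub (hB.fun_pow 2)).fun_sub
    (((hasDerivAt_inv_mul_one_add_sq_mul_inv_one_sub_sq hx0 hx1).const_mul 12).fun_mul hA)).fun_add
    (((hasDerivAt_inv_one_sub_sq_sq hx1).const_mul 48).fun_mul hP)
  rw [bergerPhi_eq_exp_neg_div_three]
  refine hPhi.congr_deriv ?_
  have hE2x := hE2 x hx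
  have hE3x := hE3 x hx
  rw [exp_rpow_neg_one_third, exp_rpow_neg_one_third, exp_rpow_neg_four_thirds] at hE2x
  rw [exp_rpow_neg_one_third, exp_rpow_neg_one_third, exp_inv_eq_exp_neg_div_three_pow_three] at hE3x
  linear_combination (norm := skip)
    (2 * deriv y1 x - 12 * (x⁻¹ * (1 + x^2) * (1 - x^2)⁻¹)) * hE2x - 2 * deriv y2 x * hE3x
  field_simp
  ring
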